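/- Let M be the Gram-type matrix on external lines with rows M_ℓ = (q²+1)χ_ℓ + χ_{ℓ^⊥}, where ℓ^⊥ is the set of external lines concurrent with ℓ. Then for every external line ℓ with antipode ℓ̄, the vector χ_ℓ + χ_{ℓ̄} lies in the row space of M over ℚ. -/

import Mathlib

structure GenQuad (P L : Type*) (I : P → L → Prop) (s t : ℕ) : Prop where
  unique_line : ∀ ⦃p q : P⦄, p ≠ q → ∀ ⦃l m : L⦄, I p l → I q l → I p m → I q m → l = m
  point_lines : ∀ p : P, {l : L | I p l}.ncard = t + 1
  line_points : ∀ l : L, {p : P | I p l}.ncard = s + 1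
  gq : ∀ (p : P) (l : L), ¬ I p l → ∃! r : P, I r l ∧ ∃ m : L, I p m ∧ I r m

def Concurrent {P L : Type*} (I : P → L → Prop) (k l : L) : Prop :=
  k ≠ l ∧ ∃ p : P, I p k ∧ I p l

/-!
Write `k ~ n` for concurrency and `ℓ^⊥` for the external lines concurrent with `ℓ`. The proof
computes the intersection numbers `#(ℓ^⊥ ∩ n^⊥)` for external `ℓ, n`:
`(q - 1)(q² + 1)` if `n = ℓ`, `0` if `n = ℓ̄`, `q - 2` if `ℓ ~ n`, `q²` if `ℓ̄ ~ n` and `q² - q`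
otherwise. The `q² + 1` common transversals of `ℓ` and a non-concurrent `n` are either in
`ℓ^⊥ ∩ n^⊥` or in `L'`, so it suffices to count the `L'`-transversals. A point `x` outside `P'` lies on a
unique line of `L'`, which `σ` fixes, so that line also contains `σx`; this makes `ℓ^⊥` and
`ℓ̄^⊥` disjoint and leaves exactly one `L'`-transversal when `ℓ̄ ~ n`. In the generic case the
`L'`-transversals of `ℓ` and `n` are the common transversals of `ℓ, ℓ̄` that meet `n`, and there
are `q + 1` of them because every triad of lines of a GQ of order `(q², q)` has `q + 1` centres.

With these numbers, the rows of `M` indexed by `ℓ^⊥ ∪ ℓ̄^⊥` sum to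
`(2q² - 2q) j + (3q - 1)(M_ℓ + M_ℓ̄) - 2q²(q + 1)(χ_ℓ + χ_ℓ̄)`, where `j` is the indicator of the
external lines. Since every column of `M` sums to `q(q² + 1)`, `j` lies in the row space of `M`.
-/

section

open scoped Classical
open Finset

variable {P L : Type*} {I : P → L → Prop}

theorem Concurrent.symm {k l : L} (h : Concurrent I k l) : Concurrent I l k :=
  ⟨h.1.symm, h.2.imp fun _ hp => ⟨hp.2, hp.1⟩⟩

theorem concurrent_comm {k l : L} : Concurrent I k l ↔ Concurrent I l k :=
  ⟨Concurrent.symm, Concurrent.symm⟩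

theorem Concurrent.ne {k l : L} (h : Concurrent I k l) : k ≠ l := h.1

theorem not_concurrent_self (l : L) : ¬ Concurrent I l l := fun h => h.1 rfl

def ConcurrentOrEq (I : P → L → Prop) (k n : L) : Prop := k = n ∨ Concurrent I k n

noncomputable def pointsOn [Fintype P] (I : P → L → Prop) (l : L) : Finset P := {p | I p l}

noncomputable def linesThrough [Fintype L] (I : P → L → Prop) (p : P) : Finset L := {l | I p l}

@[simp] theorem mem_pointsOn [Fintype P] {l : L} {p : P} : p ∈ pointsOn I l ↔ I p l := by
  simp [pointsOn]

@[simp] theorem mem_linesThrough [Fintype L] {l : L} {p : P} :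
    l ∈ linesThrough I p ↔ I p l := by
  simp [linesThrough]

noncomputable def transversals [Fintype L] (I : P → L → Prop) (k n : L) : Finset L :=
  {m | Concurrent I k m ∧ Concurrent I n m}

noncomputable def farLines [Fintype L] (I : P → L → Prop) (k₁ k₂ : L) : Finset L :=
  {n | ¬ (ConcurrentOrEq I k₁ n ∨ ConcurrentOrEq I k₂ n)}

theorem Finset.card_filter_add_card_filter_add_card_filter_nor {α : Type*} (X : Finset α)
    (A B : α → Prop) [DecidablePred A] [DecidablePred B] (hAB : ∀ x ∈ X, A x → ¬ B x) :
    #(X.filter A) + #(X.filter B) + #(X.filter fun x => ¬ (A x ∨ B x)) = #X := by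
  have hB : X.filter B = (X.filter fun x => ¬ A x).filter B := by
    rw [filter_filter]
    exact filter_congr fun x hx => ⟨fun hb => ⟨fun ha => hAB x hx ha hb, hb⟩, And.right⟩
  simp only [not_or]
  rw [hB, ← card_filter_add_card_filter_not (s := X) A, add_assoc, ← filter_filter,
    card_filter_add_card_filter_not]

theorem Finset.card_filter_mem_and {α : Type*} [Fintype α] (s : Set α) (p : α → Prop) :
    #{a | a ∈ s ∧ p a} = #{a : s | p a} := by
  rw [← Fintype.card_subtype, ← Fintype.card_subtype]
  exact Fintype.card_congr (Equiv.subtypeSubtypeEquivSubtypeInter _ _).symm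

section Moments

variable {α β : Type*} (C : Finset α) (G : Finset β) (R : α → β → Prop)
  [∀ a b, Decidable (R a b)]

theorem Finset.sum_card_filter_sq :
    ∑ n ∈ G, #(C.filter (R · n)) ^ 2 =
      ∑ c ∈ C, ∑ c' ∈ C, #(G.filter fun n => R c n ∧ R c' n) := by
  have hsq : ∀ n, #(C.filter (R · n)) ^ 2 =
      #((C ×ˢ C).filter fun x : α × α => R x.1 n ∧ R x.2 n) := by
    intro n
    rw [sq, ← card_product, ← filter_product]
  have := sum_card_bipartiteAbove_eq_sum_card_bipartiteBelow (s := C ×ˢ C) (t := G)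
    (fun x n => R x.1 n ∧ R x.2 n)
  simpa only [hsq, bipartiteAbove, bipartiteBelow, sum_product] using this.symm

variable {C G R} (a b : ℚ) (ha : ∀ c ∈ C, (#(G.filter (R c)) : ℚ) = a)
include ha

theorem Finset.sum_card_filter_eq_of_forall :
    ∑ n ∈ G, (#(C.filter (R · n)) : ℚ) = #C * a := by
  have := sum_card_bipartiteAbove_eq_sum_card_bipartiteBelow (s := C) (t := G) R
  simp only [bipartiteAbove, bipartiteBelow] at this
  rw [← Nat.cast_sum, ← this, Nat.cast_sum, sum_congr rfl ha, sum_const, nsmul_eq_mul]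

theorem Finset.sum_card_filter_sq_eq_of_forall
    (hb : ∀ c ∈ C, ∀ c' ∈ C, c ≠ c' → (#(G.filter fun n => R c n ∧ R c' n) : ℚ) = b) :
    ∑ n ∈ G, (#(C.filter (R · n)) : ℚ) ^ 2 = #C * (a + (#C - 1) * b) := by
  have hrow : ∀ c ∈ C, ∑ c' ∈ C, (#(G.filter fun n => R c n ∧ R c' n) : ℚ) =
      a + (#C - 1) * b := by
    intro c hc
    rw [← add_sum_erase _ _ hc, sum_congr rfl fun c' hc' =>
      hb c hc c' (mem_erase.1 hc').2 (mem_erase.1 hc').1.symm]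
    simp only [and_self, sum_const, nsmul_eq_mul]
    rw [ha c hc, card_erase_of_mem hc, Nat.cast_sub (one_le_card.2 ⟨c, hc⟩), Nat.cast_one]
  have := congrArg (Nat.cast : ℕ → ℚ) (sum_card_filter_sq C G R)
  push_cast at this
  rw [this, sum_congr rfl hrow, sum_const, nsmul_eq_mul]

end Moments

theorem Finset.eq_of_sum_eq_of_sum_sq_eq {ι R : Type*} [Field R] [LinearOrder R]
    [IsStrictOrderedRing R] (G : Finset ι) (f : ι → R) (μ : R)
    (h1 : ∑ n ∈ G, f n = #G * μ) (h2 : ∑ n ∈ G, f n ^ 2 = #G * μ ^ 2) :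
    ∀ n ∈ G, f n = μ := by
  have hvar : ∑ n ∈ G, (f n - μ) ^ 2 = 0 := by
    simp_rw [sub_sq, sum_add_distrib, sum_sub_distrib, ← sum_mul, ← mul_sum, h1, h2,
      sum_const, nsmul_eq_mul]
    ring
  intro n hn
  have := (sum_eq_zero_iff_of_nonneg fun n _ => sq_nonneg (f n - μ)).1 hvar n hn
  linear_combination (pow_eq_zero_iff two_ne_zero).1 this

namespace GenQuad

variable {s t : ℕ}

theorem unique_point (h : GenQuad P L I s t) {l m : L} (hlm : l ≠ m) {a b : P}
    (hal : I a l) (ham : I a m) (hbl : I b l) (hbm : I b m) : a = b :=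
  by_contra fun hab => hlm (h.unique_line hab hal hbl ham hbm)

theorem unique_foot (h : GenQuad P L I s t) {p : P} {l : L} (hpl : ¬ I p l)
    {a b : P} (hal : I a l) (hbl : I b l) {m m' : L} (hpm : I p m) (ham : I a m)
    (hpm' : I p m') (hbm' : I b m') : a = b := by
  obtain ⟨r, -, hr⟩ := h.gq p l hpl
  rw [hr a ⟨hal, m, hpm, ham⟩, hr b ⟨hbl, m', hpm', hbm'⟩]

theorem dual (h : GenQuad P L I s t) : GenQuad L P (fun l p => I p l) t s where
  unique_line _ _ hlm _ _ h1 h2 h3 h4 := h.unique_point hlm h1 h2 h3 h4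
  point_lines := h.line_points
  line_points := h.point_lines
  gq k x hxk := by
    obtain ⟨r, ⟨hrk, m, hxm, hrm⟩, hr⟩ := h.gq x k hxk
    refine ⟨m, ⟨hxm, r, hrk, hrm⟩, ?_⟩
    rintro m' ⟨hxm', y, hyk, hym'⟩
    obtain rfl := hr y ⟨hyk, m', hxm', hym'⟩
    exact h.unique_line (by rintro rfl; exact hxk hyk) hxm' hym' hxm hrm

theorem exists_incident (h : GenQuad P L I s t) (l : L) : ∃ p, I p l :=
  Set.nonempty_of_ncard_ne_zero (s := {p | I p l}) (by rw [h.line_points l]; exact s.succ_ne_zero)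

theorem exists_common_point (h : GenQuad P L I s t) {a b c : L} (hab : Concurrent I a b)
    (hac : Concurrent I a c) (hbc : Concurrent I b c) : ∃ z, I z a ∧ I z b ∧ I z c := by
  obtain ⟨-, p, hpa, hpb⟩ := hab
  obtain ⟨-, x, hxa, hxc⟩ := hac
  obtain ⟨-, y, hyb, hyc⟩ := hbc
  by_cases hpc : I p c
  · exact ⟨p, hpa, hpb, hpc⟩
  · obtain rfl := h.unique_foot hpc hxc hyc hpa hxa hpb hyb
    exact ⟨x, hxa, hyb, hxc⟩

theorem incident_of_concurrent (h : GenQuad P L I s t) {k c m : L} {p : P} (hkc : k ≠ c)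
    (hpk : I p k) (hpc : I p c) (hkm : Concurrent I k m) (hcm : Concurrent I c m) :
    I p m := by
  obtain ⟨z, hzk, hzc, hzm⟩ := h.exists_common_point ⟨hkc, p, hpk, hpc⟩ hkm hcm
  rwa [h.unique_point hkc hzk hzc hpk hpc] at hzm

theorem concurrent_and_concurrentOrEq_iff (h : GenQuad P L I s t) {k c n : L} {p : P}
    (hkc : k ≠ c) (hpk : I p k) (hpc : I p c) :
    Concurrent I c n ∧ ConcurrentOrEq I k n ↔ I p n ∧ n ≠ c := by
  constructor
  · rintro ⟨hcn, rfl | hkn⟩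
    · exact ⟨hpk, hkc⟩
    · exact ⟨h.incident_of_concurrent hkc hpk hpc hkn hcn, hcn.ne.symm⟩
  · rintro ⟨hpn, hnc⟩
    refine ⟨⟨hnc.symm, p, hpc, hpn⟩, ?_⟩
    by_cases hkn : k = n
    · exact Or.inl hkn
    · exact Or.inr ⟨hkn, p, hpk, hpn⟩

theorem not_concurrent_of_transversals (h : GenQuad P L I s t) {k n c c' : L} (hkn : k ≠ n)
    (hnc : ¬ Concurrent I k n) (hkc : Concurrent I k c) (hnc₁ : Concurrent I n c)
    (hkc' : Concurrent I k c') (hnc' : Concurrent I n c') (hcc' : c ≠ c') :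
    ¬ Concurrent I c c' := by
  intro hc
  obtain ⟨z, hzc, hzc', hzk⟩ := h.exists_common_point hc hkc.symm hkc'.symm
  obtain ⟨w, hwc, hwc', hwn⟩ := h.exists_common_point hc hnc₁.symm hnc'.symm
  have hzw : z ≠ w := by
    rintro rfl
    exact hnc ⟨hkn, z, hzk, hwn⟩
  exact hcc' (h.unique_line hzw hzc hwc hzc' hwc')

theorem card_pointsOn [Fintype P] (h : GenQuad P L I s t) (l : L) : #(pointsOn I l) = s + 1 := by
  simpa [Set.ncard_eq_toFinset_card', pointsOn] using h.line_points l

theorem card_linesThrough [Fintype L] (h : GenQuad P L I s t) (p : P) :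
    #(linesThrough I p) = t + 1 := by
  simpa [Set.ncard_eq_toFinset_card', linesThrough] using h.point_lines p

theorem exists_ne_incident [Fintype P] (h : GenQuad P L I s t) (hs : 1 ≤ s) (l : L) (x : P) :
    ∃ y, I y l ∧ y ≠ x := by
  obtain ⟨a, ha, b, hb, hab⟩ := one_lt_card.1 (by rw [h.card_pointsOn l]; omega)
  rw [mem_pointsOn] at ha hb
  by_cases hax : a = x
  · exact ⟨b, hb, fun e => hab (hax.trans e.symm)⟩
  · exact ⟨a, ha, hax⟩

section Counting

variable [Fintype P] [Fintype L]

theorem card_concurrent (h : GenQuad P L I s t) (m : L) :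
    #{m' | Concurrent I m m'} = (s + 1) * t := by
  have hunion : ({m' | Concurrent I m m'} : Finset L) =
      (pointsOn I m).biUnion fun x => (linesThrough I x).erase m := by
    ext m'
    simp only [mem_filter, mem_univ, true_and, mem_biUnion, mem_pointsOn, mem_erase,
      mem_linesThrough]
    unfold Concurrent
    exact ⟨fun ⟨hne, x, hx, hx'⟩ => ⟨x, hx, hne.symm, hx'⟩,
      fun ⟨x, hx, hne, hx'⟩ => ⟨hne.symm, x, hx, hx'⟩⟩
  rw [hunion, card_biUnion, sum_const_nat fun x hx => ?_, h.card_pointsOn]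
  · rw [card_erase_of_mem (mem_linesThrough.2 (mem_pointsOn.1 hx)), h.card_linesThrough]
    rfl
  · intro x hx y hy hxy
    simp only [Function.onFun, disjoint_left, mem_erase, mem_linesThrough]
    exact fun m' ⟨hm', hxm'⟩ ⟨_, hym'⟩ =>
      hm' (h.unique_line hxy hxm' hym' (mem_pointsOn.1 hx) (mem_pointsOn.1 hy))

theorem card_collinear_not_incident (h : GenQuad P L I s t) {l : L} {x : P} (hx : I x l) :
    #{p | Concurrent (fun l p => I p l) x p ∧ ¬ I p l} = t * s := by
  have hsplit := card_filter_add_card_filter_not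
    (s := ({p | Concurrent (fun l p => I p l) x p} : Finset P)) (I · l)
  have hon : ({p | Concurrent (fun l p => I p l) x p} : Finset P).filter (I · l) =
      (pointsOn I l).erase x := by
    ext p
    simp only [mem_filter, mem_univ, true_and, mem_erase, mem_pointsOn]
    unfold Concurrent
    exact ⟨fun ⟨⟨hne, _⟩, hp⟩ => ⟨hne.symm, hp⟩,
      fun ⟨hne, hp⟩ => ⟨⟨hne.symm, l, hx, hp⟩, hp⟩⟩
  rw [hon, card_erase_of_mem (mem_pointsOn.2 hx), h.card_pointsOn, h.dual.card_concurrent,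
    filter_filter] at hsplit
  simp only [add_tsub_cancel_right] at hsplit
  linarith

theorem card_points (h : GenQuad P L I s t) (l : L) :
    Fintype.card P = (s + 1) * (s * t + 1) := by
  have hoff : #{p | ¬ I p l} * 1 = #(pointsOn I l) * (t * s) := by
    refine card_mul_eq_card_mul (fun p x => Concurrent (fun l p => I p l) x p)
      (fun p hp => ?_) (fun x hx => ?_)
    · obtain ⟨r, ⟨hrl, m, hpm, hrm⟩, hr⟩ := h.gq p l (mem_filter.1 hp).2
      rw [card_eq_one_iff_existsUnique]
      refine ⟨r, ?_, fun x hx => ?_⟩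
      · simp only [bipartiteAbove, mem_filter, mem_pointsOn]
        exact ⟨hrl, fun e => (mem_filter.1 hp).2 (e ▸ hrl), m, hrm, hpm⟩
      · simp only [bipartiteAbove, mem_filter, mem_pointsOn] at hx
        obtain ⟨hxl, -, m', hxm', hpm'⟩ := hx
        exact hr x ⟨hxl, m', hpm', hxm'⟩
    · rw [← h.card_collinear_not_incident (mem_pointsOn.1 hx), bipartiteBelow, filter_filter]
      congr 1
      exact filter_congr fun p _ => and_comm
  have hsplit := card_filter_add_card_filter_not (s := (univ : Finset P)) (I · l)
  rw [card_univ] at hsplit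
  change #(pointsOn I l) + _ = _ at hsplit
  rw [h.card_pointsOn] at hoff hsplit
  rw [← hsplit]
  linarith

theorem card_lines [Nonempty L] (h : GenQuad P L I s t) :
    Fintype.card L = (t + 1) * (t * s + 1) := by
  obtain ⟨p, -⟩ := h.exists_incident (Classical.arbitrary L)
  exact h.dual.card_points p

theorem card_concurrentOrEq (h : GenQuad P L I s t) (k : L) :
    #{n | ConcurrentOrEq I k n} = (s + 1) * t + 1 := by
  have hinsert : ({n | ConcurrentOrEq I k n} : Finset L) =
      insert k ({n | Concurrent I k n} : Finset L) := by
    ext n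
    simp only [mem_filter, mem_univ, true_and, mem_insert]
    rw [ConcurrentOrEq, eq_comm]
  rw [hinsert, card_insert_of_notMem (by simpa using not_concurrent_self k),
    h.card_concurrent]

theorem card_transversals (h : GenQuad P L I s t) {k n : L} (hkn : k ≠ n)
    (hnc : ¬ Concurrent I k n) : #(transversals I k n) = s + 1 := by
  have hcount := card_mul_eq_card_mul (fun m x => I x m) (m := 1) (n := 1)
    (s := transversals I k n) (t := pointsOn I k) ?_ ?_
  · simpa [h.card_pointsOn] using hcount
  · intro m hm
    obtain ⟨⟨hkm, x, hxk, hxm⟩, -⟩ := (mem_filter.1 hm).2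
    rw [card_eq_one_iff_existsUnique]
    refine ⟨x, by simp [bipartiteAbove, hxk, hxm], fun y hy => ?_⟩
    simp only [bipartiteAbove, mem_filter, mem_pointsOn] at hy
    exact h.unique_point hkm hy.1 hy.2 hxk hxm
  · intro x hx
    rw [mem_pointsOn] at hx
    have hxn : ¬ I x n := fun hxn => hnc ⟨hkn, x, hx, hxn⟩
    obtain ⟨m, ⟨hxm, z, hzn, hzm⟩, hm⟩ := h.dual.gq n x hxn
    rw [card_eq_one_iff_existsUnique]
    refine ⟨m, ?_, fun m' hm' => ?_⟩
    · simp only [bipartiteBelow, transversals, mem_filter, mem_univ, true_and]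
      refine ⟨⟨⟨?_, x, hx, hxm⟩, ?_, z, hzn, hzm⟩, hxm⟩
      · rintro rfl
        exact hnc ⟨hkn, z, hzm, hzn⟩
      · rintro rfl
        exact hxn hxm
    · simp only [bipartiteBelow, transversals, mem_filter, mem_univ, true_and] at hm'
      obtain ⟨⟨-, -, z', hz'n, hz'm'⟩, hxm'⟩ := hm'
      exact hm m' ⟨hxm', z', hz'n, hz'm'⟩

section Triad

variable {k₁ k₂ c c' : L}

theorem card_farLines_add (h : GenQuad P L I s t) (hne : k₁ ≠ k₂) (h12 : ¬ Concurrent I k₁ k₂) :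
    #(farLines I k₁ k₂) + 2 * ((s + 1) * t + 1) = Fintype.card L + (s + 1) := by
  have hinter : ({n | ConcurrentOrEq I k₁ n} : Finset L) ∩
      ({n | ConcurrentOrEq I k₂ n} : Finset L) = transversals I k₁ k₂ := by
    ext n
    simp only [mem_inter, mem_filter, mem_univ, true_and, transversals]
    unfold ConcurrentOrEq
    constructor
    · rintro ⟨rfl | h1, rfl | h2⟩
      exacts [absurd rfl hne, absurd h2.symm h12, absurd h1 h12, ⟨h1, h2⟩]
    · exact fun ⟨h1, h2⟩ => ⟨Or.inr h1, Or.inr h2⟩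
  have hunion := card_union_add_card_inter ({n | ConcurrentOrEq I k₁ n} : Finset L)
    {n | ConcurrentOrEq I k₂ n}
  have hsplit := card_filter_add_card_filter_not (s := (univ : Finset L))
    fun n => ConcurrentOrEq I k₁ n ∨ ConcurrentOrEq I k₂ n
  rw [hinter, h.card_transversals hne h12, h.card_concurrentOrEq, h.card_concurrentOrEq,
    ← filter_or] at hunion
  rw [card_univ] at hsplit
  rw [farLines]
  omega

/-- The far lines concurrent with `c` are what is left of the `(s + 1) t` lines concurrent with
`c` after removing the `t` lines through `c ∩ k₁` and the `t` lines through `c ∩ k₂`. -/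
theorem card_filter_concurrent_farLines_add (h : GenQuad P L I s t) (hne : k₁ ≠ k₂)
    (h12 : ¬ Concurrent I k₁ k₂) (hc : c ∈ transversals I k₁ k₂) :
    #((farLines I k₁ k₂).filter (Concurrent I c)) + 2 * t = (s + 1) * t := by
  simp only [transversals, mem_filter, mem_univ, true_and] at hc
  obtain ⟨⟨hk₁c, p₁, hp₁k, hp₁c⟩, ⟨hk₂c, p₂, hp₂k, hp₂c⟩⟩ := hc
  have hp₁₂ : p₁ ≠ p₂ := by
    rintro rfl
    exact h12 ⟨hne, p₁, hp₁k, hp₂k⟩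
  have hnear : ∀ {k : L} {p : P}, k ≠ c → I p k → I p c →
      #(({n | Concurrent I c n} : Finset L).filter (ConcurrentOrEq I k)) = t := by
    intro k p hkc hpk hpc
    have hlines : ({n | Concurrent I c n} : Finset L).filter (ConcurrentOrEq I k) =
        (linesThrough I p).erase c := by
      ext n
      rw [filter_filter, mem_filter, mem_erase, mem_linesThrough,
        h.concurrent_and_concurrentOrEq_iff hkc hpk hpc]
      simp only [mem_univ, true_and, and_comm]
    rw [hlines, card_erase_of_mem (mem_linesThrough.2 hpc), h.card_linesThrough]
    rfl
  have hsplit := card_filter_add_card_filter_add_card_filter_nor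
    ({n | Concurrent I c n} : Finset L) (ConcurrentOrEq I k₁) (ConcurrentOrEq I k₂)
    fun n hn h₁ h₂ => by
      have hcn := (mem_filter.1 hn).2
      obtain ⟨hp₁n, hnc⟩ := (h.concurrent_and_concurrentOrEq_iff hk₁c hp₁k hp₁c).1 ⟨hcn, h₁⟩
      obtain ⟨hp₂n, -⟩ := (h.concurrent_and_concurrentOrEq_iff hk₂c hp₂k hp₂c).1 ⟨hcn, h₂⟩
      exact hnc (h.unique_line hp₁₂ hp₁n hp₂n hp₁c hp₂c)
  rw [hnear hk₁c hp₁k hp₁c, hnear hk₂c hp₂k hp₂c, h.card_concurrent] at hsplit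
  rw [farLines, filter_comm]
  linarith

/-- Two transversals `c ≠ c'` of `k₁, k₂` are not concurrent, so they have `s + 1` common
transversals, and `k₁`, `k₂` are the only ones that are not far. -/
theorem card_filter_transversals_farLines_add (h : GenQuad P L I s t) (hne : k₁ ≠ k₂)
    (h12 : ¬ Concurrent I k₁ k₂) (hc : c ∈ transversals I k₁ k₂)
    (hc' : c' ∈ transversals I k₁ k₂) (hcc' : c ≠ c') :
    #((farLines I k₁ k₂).filter fun n => Concurrent I c n ∧ Concurrent I c' n) + 2 = s + 1 := by
  simp only [transversals, mem_filter, mem_univ, true_and] at hc hc'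
  have hnc : ¬ Concurrent I c c' :=
    h.not_concurrent_of_transversals hne h12 hc.1 hc.2 hc'.1 hc'.2 hcc'
  have hsingle : ∀ {k : L}, Concurrent I k c → Concurrent I k c' →
      (transversals I c c').filter (ConcurrentOrEq I k) = {k} := by
    rintro k ⟨hkc, p, hpk, hpc⟩ ⟨hkc', p', hp'k, hp'c'⟩
    have hpp' : p ≠ p' := by
      rintro rfl
      exact hnc ⟨hcc', p, hpc, hp'c'⟩
    ext n
    simp only [transversals, filter_filter, mem_filter, mem_univ, true_and, mem_singleton]
    constructor
    · rintro ⟨⟨hcn, hc'n⟩, hkn⟩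
      obtain ⟨hpn, -⟩ := (h.concurrent_and_concurrentOrEq_iff hkc hpk hpc).1 ⟨hcn, hkn⟩
      obtain ⟨hp'n, -⟩ := (h.concurrent_and_concurrentOrEq_iff hkc' hp'k hp'c').1 ⟨hc'n, hkn⟩
      exact h.unique_line hpp' hpn hp'n hpk hp'k
    · rintro rfl
      exact ⟨⟨⟨hkc.symm, p, hpc, hpk⟩, ⟨hkc'.symm, p', hp'c', hp'k⟩⟩, Or.inl rfl⟩
  have hsplit := card_filter_add_card_filter_add_card_filter_nor (transversals I c c')
    (ConcurrentOrEq I k₁) (ConcurrentOrEq I k₂) fun n hn h₁ h₂ => by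
      have h₁' := hsingle hc.1 hc'.1 ▸ mem_filter.2 ⟨hn, h₁⟩
      have h₂' := hsingle hc.2 hc'.2 ▸ mem_filter.2 ⟨hn, h₂⟩
      exact hne ((mem_singleton.1 h₁').symm.trans (mem_singleton.1 h₂'))
  rw [hsingle hc.1 hc'.1, hsingle hc.2 hc'.2, card_singleton, card_singleton,
    h.card_transversals hcc' hnc] at hsplit
  rw [farLines, filter_comm, ← transversals]
  linarith

/-- Each of the `q² + 1` transversals `c` of `k₁, k₂` is concurrent with `q³ - q` far lines, and
two of them with `q² - 1` common ones. The first two moments of `n ↦ #{c | c ~ n}` over the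
`(q² - q)(q² + 1)` far lines are then those of the constant function `q + 1`. -/
theorem card_filter_transversals_concurrent {q : ℕ} (h : GenQuad P L I (q ^ 2) q)
    (hne : k₁ ≠ k₂) (h12 : ¬ Concurrent I k₁ k₂) {n : L} (hn : n ∈ farLines I k₁ k₂) :
    #((transversals I k₁ k₂).filter (Concurrent I · n)) = q + 1 := by
  set C := transversals I k₁ k₂
  set G := farLines I k₁ k₂
  have hC : (#C : ℚ) = q ^ 2 + 1 := by exact_mod_cast h.card_transversals hne h12
  have hG : (#G : ℚ) = (q ^ 2 - q) * (q ^ 2 + 1) := by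
    have : Nonempty L := ⟨k₁⟩
    have := congrArg (Nat.cast : ℕ → ℚ) (h.card_farLines_add hne h12)
    rw [h.card_lines] at this
    push_cast at this
    linear_combination this
  have hdeg : ∀ c ∈ C, (#(G.filter (Concurrent I c)) : ℚ) = q ^ 3 - q := by
    intro c hc
    have := congrArg (Nat.cast : ℕ → ℚ) (h.card_filter_concurrent_farLines_add hne h12 hc)
    push_cast at this
    linear_combination this
  have hcodeg : ∀ c ∈ C, ∀ c' ∈ C, c ≠ c' →
      (#(G.filter fun n => Concurrent I c n ∧ Concurrent I c' n) : ℚ) = q ^ 2 - 1 := by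
    intro c hc c' hc' hcc'
    have := congrArg (Nat.cast : ℕ → ℚ)
      (h.card_filter_transversals_farLines_add hne h12 hc hc' hcc')
    push_cast at this
    linear_combination this
  have hconst := eq_of_sum_eq_of_sum_sq_eq G (fun n => (#(C.filter (Concurrent I · n)) : ℚ))
    (q + 1) (by rw [sum_card_filter_eq_of_forall _ hdeg, hC, hG]; ring)
    (by rw [sum_card_filter_sq_eq_of_forall _ _ hdeg hcodeg, hC, hG]; ring) n hn
  exact_mod_cast hconst

end Triad

end Counting

end GenQuad

def External (I : P → L → Prop) (P' : Set P) (l : L) : Prop := ∀ p ∈ P', ¬ I p l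

noncomputable def externalPerp [Fintype L] (I : P → L → Prop) (P' : Set P) (l : L) : Finset L :=
  {m | External I P' m ∧ Concurrent I l m}

@[simp] theorem mem_externalPerp [Fintype L] {P' : Set P} {l m : L} :
    m ∈ externalPerp I P' l ↔ External I P' m ∧ Concurrent I l m := by
  simp [externalPerp]

/-- A GQ of order `(q², q)` with a subquadrangle `(P', L')` of order `(q, q)` containing every
line through each of its points, and an involutory collineation `σ` fixing `P'` pointwise and
moving every external line. The antipode `ℓ̄` of an external line `ℓ` is `σL ℓ`. -/
structure SubquadrangleInvolution (I : P → L → Prop) (q : ℕ) (P' : Set P) (L' : Set L)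
    (σP : P ≃ P) (σL : L ≃ L) : Prop where
  two_le : 2 ≤ q
  gq : GenQuad P L I (q ^ 2) q
  nonempty : P'.Nonempty
  sub : GenQuad P' L' (fun p l => I p.1 l.1) q q
  mem_of_incident : ∀ p ∈ P', ∀ l, I p l → l ∈ L'
  incident_iff : ∀ p l, I p l ↔ I (σP p) (σL l)
  involutive : ∀ l, σL (σL l) = l
  fixed : ∀ p ∈ P', σP p = p
  moves_external : ∀ l, External I P' l → σL l ≠ l

namespace SubquadrangleInvolution

variable {q : ℕ} {P' : Set P} {L' : Set L} {σP : P ≃ P} {σL : L ≃ L}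
  (S : SubquadrangleInvolution I q P' L' σP σL)
include S

theorem external_iff_notMem {l : L} : External I P' l ↔ l ∉ L' := by
  constructor
  · intro hl hL
    obtain ⟨p, hp⟩ := S.sub.exists_incident ⟨l, hL⟩
    exact hl p p.2 hp
  · intro hL p hp hpl
    exact hL (S.mem_of_incident p hp l hpl)

theorem external_sigma {l : L} (hl : External I P' l) : External I P' (σL l) := by
  intro p hp hpl
  have := (S.incident_iff p (σL l)).1 hpl
  rw [S.fixed p hp, S.involutive] at this
  exact hl p hp this

theorem eq_of_mem_of_incident {x : P} (hx : x ∉ P') {l₁ l₂ : L} (h₁ : l₁ ∈ L') (h₂ : l₂ ∈ L')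
    (hx₁ : I x l₁) (hx₂ : I x l₂) : l₁ = l₂ := by
  by_contra h₁₂
  obtain ⟨p, hp⟩ := S.sub.exists_incident ⟨l₁, h₁⟩
  have hpx : (p : P) ≠ x := fun e => hx (e ▸ p.2)
  have hp₂ : ¬ I p l₂ := fun hp₂ => h₁₂ (S.gq.unique_line hpx hp hx₁ hp₂ hx₂)
  obtain ⟨r, ⟨hr₂, m, hpm, hrm⟩, -⟩ := S.sub.gq p ⟨l₂, h₂⟩ hp₂
  exact hx (S.gq.unique_foot hp₂ hx₂ hr₂ hp hx₁ hpm hrm ▸ r.2)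

section

variable [Fintype P]

theorem sigma_eq_of_mem {l : L} (hl : l ∈ L') : σL l = l := by
  have htwo : 1 < #(pointsOn (fun (p : P') (l : L') => I p l) ⟨l, hl⟩) := by
    rw [S.sub.card_pointsOn]
    have := S.two_le
    omega
  obtain ⟨a, ha, b, hb, hab⟩ := one_lt_card.1 htwo
  rw [mem_pointsOn] at ha hb
  have hσ : ∀ p : P', I p l → I p (σL l) := fun p hp => by
    simpa [S.fixed p p.2] using (S.incident_iff p l).1 hp
  exact S.gq.unique_line (Subtype.coe_injective.ne hab) (hσ a ha) (hσ b hb) ha hb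

theorem incident_sigma_of_mem {x : P} {m : L} (hm : m ∈ L') (hxm : I x m) : I (σP x) m := by
  simpa [S.sigma_eq_of_mem hm] using (S.incident_iff x m).1 hxm

theorem concurrent_sigma_of_mem {k m : L} (hk : External I P' k) (hm : m ∈ L')
    (hkm : Concurrent I k m) : Concurrent I (σL k) m := by
  obtain ⟨-, x, hxk, hxm⟩ := hkm
  exact ⟨fun e => S.external_iff_notMem.1 (S.external_sigma hk) (e ▸ hm), σP x,
    (S.incident_iff x k).1 hxk, S.incident_sigma_of_mem hm hxm⟩

theorem card_filter_notMem_pointsOn_add {l : L} (hl : l ∈ L') :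
    #((pointsOn I l).filter (· ∉ P')) + (q + 1) = q ^ 2 + 1 := by
  have hsub : #{p : P' | I p l} = q + 1 := S.sub.card_pointsOn ⟨l, hl⟩
  rw [← card_filter_mem_and P' (I · l)] at hsub
  have hon : (pointsOn I l).filter (· ∈ P') = ({a | a ∈ P' ∧ I a l} : Finset P) := by
    ext y
    simp [pointsOn, and_comm]
  rw [← hsub, ← hon, add_comm, card_filter_add_card_filter_not, S.gq.card_pointsOn]

variable [Fintype L]

theorem sum_card_filter_mem_incident :
    ∑ y ∈ ({y | y ∉ P'} : Finset P), #(({l | l ∈ L'} : Finset L).filter (I y)) =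
      #{y | y ∉ P'} := by
  obtain ⟨p₀, hp₀⟩ := S.nonempty
  obtain ⟨l₀, -⟩ := S.sub.dual.exists_incident ⟨p₀, hp₀⟩
  have : Nonempty L' := ⟨l₀⟩
  have hdouble := sum_card_bipartiteAbove_eq_sum_card_bipartiteBelow
    (s := ({y | y ∉ P'} : Finset P)) (t := ({l | l ∈ L'} : Finset L)) I
  have hline : ∀ l ∈ ({l | l ∈ L'} : Finset L), #(bipartiteBelow I {y | y ∉ P'} l) = q ^ 2 - q := by
    intro l hl
    have hoff : bipartiteBelow I {y | y ∉ P'} l = (pointsOn I l).filter (· ∉ P') := by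
      ext y
      simp [bipartiteBelow, pointsOn, and_comm]
    have := S.card_filter_notMem_pointsOn_add (mem_filter.1 hl).2
    rw [hoff]
    omega
  have hP' : #{y | y ∈ P'} = (q + 1) * (q * q + 1) := by
    rw [← Fintype.card_subtype]
    exact S.sub.card_points l₀
  have hL' : #{l | l ∈ L'} = (q + 1) * (q * q + 1) := by
    rw [← Fintype.card_subtype]
    exact S.sub.card_lines
  have hsplit := card_filter_add_card_filter_not (s := (univ : Finset P)) (· ∈ P')
  rw [card_univ, S.gq.card_points l₀, hP'] at hsplit
  simp only [bipartiteAbove] at hdouble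
  rw [hdouble, sum_congr rfl hline, sum_const, smul_eq_mul, hL']
  zify [Nat.le_self_pow two_ne_zero q] at hsplit ⊢
  linear_combination -hsplit

theorem exists_mem_incident {x : P} (hx : x ∉ P') : ∃ l ∈ L', I x l := by
  by_contra! hno
  have hle : ∀ y ∈ ({y | y ∉ P'} : Finset P), #(({l | l ∈ L'} : Finset L).filter (I y)) ≤ 1 := by
    intro y hy
    refine card_le_one.2 fun l₁ h₁ l₂ h₂ => ?_
    simp only [filter_filter, mem_filter, mem_univ, true_and] at h₁ h₂
    exact S.eq_of_mem_of_incident (mem_filter.1 hy).2 h₁.1 h₂.1 h₁.2 h₂.2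
  have hx₀ : #(({l | l ∈ L'} : Finset L).filter (I x)) = 0 := by
    simpa using hno
  have hlt := sum_lt_sum hle ⟨x, by simpa using hx, by omega⟩
  rw [S.sum_card_filter_mem_incident, sum_const, smul_eq_mul, mul_one] at hlt
  exact lt_irrefl _ hlt

/-- If `k` met `σk` at `x`, then for another point `y` of `k` the `L'`-line through `y`, which also
contains `σy`, would have two feet `y ≠ σy` from `x`. -/
theorem not_concurrent_sigma {k : L} (hk : External I P' k) : ¬ Concurrent I k (σL k) := by
  rintro ⟨hne, x, hxk, hxσ⟩
  obtain ⟨y, hyk, hyx⟩ :=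
    S.gq.exists_ne_incident (Nat.one_le_pow _ _ (by have := S.two_le; omega)) k x
  obtain ⟨m, hm, hym⟩ := S.exists_mem_incident fun hy => hk y hy hyk
  have hxm : ¬ I x m := fun hxm =>
    S.external_iff_notMem.1 hk (S.gq.unique_line hyx hym hxm hyk hxk ▸ hm)
  have hσy : I (σP y) (σL k) := (S.incident_iff y k).1 hyk
  have hyσy : y = σP y :=
    S.gq.unique_foot hxm hym (S.incident_sigma_of_mem hm hym) hxk hyk hxσ hσy
  rw [← hyσy] at hσy
  exact hne (S.gq.unique_line hyx hyk hxk hσy hxσ)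

theorem not_concurrent_sigma_of_concurrent {k m : L} (hk : External I P' k)
    (hm : External I P' m) (hkm : Concurrent I k m) : ¬ Concurrent I (σL k) m := by
  rintro ⟨-, v, hvσ, hvm⟩
  obtain ⟨-, u, huk, hum⟩ := hkm
  have hkσ : k ≠ σL k := (S.moves_external k hk).symm
  have hσuk : I (σP u) (σL k) := (S.incident_iff u k).1 huk
  have huσu : u ≠ σP u := by
    intro e
    rw [← e] at hσuk
    exact S.not_concurrent_sigma hk ⟨hkσ, u, huk, hσuk⟩
  have huv : u ≠ v := by
    rintro rfl
    exact S.not_concurrent_sigma hk ⟨hkσ, u, huk, hvσ⟩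
  obtain ⟨l, hl, hul⟩ := S.exists_mem_incident fun hu => hk u hu huk
  have hvl : ¬ I v l := fun hvl =>
    S.external_iff_notMem.1 hm (S.gq.unique_line huv hul hvl hum hvm ▸ hl)
  exact huσu (S.gq.unique_foot hvl hul (S.incident_sigma_of_mem hl hul) hvm hum hvσ hσuk)

theorem card_filter_external_linesThrough {x : P} (hx : x ∉ P') :
    #((linesThrough I x).filter (External I P')) = q := by
  have hsub : #((linesThrough I x).filter (· ∈ L')) = 1 := by
    obtain ⟨l, hl, hxl⟩ := S.exists_mem_incident hx
    rw [card_eq_one_iff_existsUnique]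
    refine ⟨l, by simp [hl, hxl], fun l' hl' => ?_⟩
    simp only [mem_filter, mem_linesThrough] at hl'
    exact S.eq_of_mem_of_incident hx hl'.2 hl hl'.1 hxl
  have hsplit := card_filter_add_card_filter_not (s := linesThrough I x) (· ∈ L')
  rw [hsub, S.gq.card_linesThrough, filter_congr fun l _ => S.external_iff_notMem.symm] at hsplit
  linarith

theorem card_externalPerp {n : L} (hn : External I P' n) :
    #(externalPerp I P' n) = (q - 1) * (q ^ 2 + 1) := by
  have hunion : externalPerp I P' n =
      (pointsOn I n).biUnion fun x => ((linesThrough I x).filter (External I P')).erase n := by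
    ext m
    simp only [externalPerp, mem_filter, mem_univ, true_and, mem_biUnion, mem_pointsOn,
      mem_erase, mem_linesThrough]
    constructor
    · rintro ⟨hm, hnm, x, hxn, hxm⟩
      exact ⟨x, hxn, hnm.symm, hxm, hm⟩
    · rintro ⟨x, hxn, hmn, hxm, hm⟩
      exact ⟨hm, hmn.symm, x, hxn, hxm⟩
  rw [hunion, card_biUnion, sum_const_nat fun x hx => ?_, S.gq.card_pointsOn, mul_comm]
  · rw [mem_pointsOn] at hx
    rw [card_erase_of_mem (mem_filter.2 ⟨mem_linesThrough.2 hx, hn⟩),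
      S.card_filter_external_linesThrough fun h => hn x h hx]
  · intro x hx y hy hxy
    simp only [Function.onFun, disjoint_left, mem_erase, mem_filter, mem_linesThrough]
    exact fun m ⟨hmn, hxm, _⟩ ⟨_, hym, _⟩ =>
      hmn (S.gq.unique_line hxy hxm hym (mem_pointsOn.1 hx) (mem_pointsOn.1 hy))

theorem card_externalPerp_inter_of_concurrent {k n : L} (hk : External I P' k)
    (hn : External I P' n) (hkn : Concurrent I k n) :
    #(externalPerp I P' k ∩ externalPerp I P' n) = q - 2 := by
  obtain ⟨hne, x, hxk, hxn⟩ := hkn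
  have heq : externalPerp I P' k ∩ externalPerp I P' n =
      (((linesThrough I x).filter (External I P')).erase k).erase n := by
    ext m
    simp only [externalPerp, mem_inter, mem_filter, mem_univ, true_and, mem_erase,
      mem_linesThrough]
    constructor
    · rintro ⟨⟨hm, hkm⟩, -, hnm⟩
      obtain ⟨z, hzk, hzn, hzm⟩ := S.gq.exists_common_point ⟨hne, x, hxk, hxn⟩ hkm hnm
      rw [S.gq.unique_point hne hzk hzn hxk hxn] at hzm
      exact ⟨hnm.ne.symm, hkm.ne.symm, hzm, hm⟩
    · rintro ⟨hmn, hmk, hxm, hm⟩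
      exact ⟨⟨hm, hmk.symm, x, hxk, hxm⟩, hm, hmn.symm, x, hxn, hxm⟩
  rw [heq, card_erase_of_mem, card_erase_of_mem,
    S.card_filter_external_linesThrough fun h => hk x h hxk]
  · omega
  · exact mem_filter.2 ⟨mem_linesThrough.2 hxk, hk⟩
  · exact mem_erase.2 ⟨hne.symm, mem_filter.2 ⟨mem_linesThrough.2 hxn, hn⟩⟩

theorem card_externalPerp_inter_add {k n : L} (hkn : k ≠ n) (hnc : ¬ Concurrent I k n) :
    #(externalPerp I P' k ∩ externalPerp I P' n) + #((transversals I k n).filter (· ∈ L')) =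
      q ^ 2 + 1 := by
  rw [← S.gq.card_transversals hkn hnc,
    ← card_filter_add_card_filter_not (s := transversals I k n) (· ∈ L'), add_comm]
  congr 2
  ext m
  simp only [externalPerp, transversals, mem_inter, mem_filter, mem_univ, true_and,
    S.external_iff_notMem]
  tauto

theorem card_filter_mem_transversals {k n : L} (hk : External I P' k) (hnc : ¬ Concurrent I k n)
    (hnk : n ≠ k) (hnσ : n ≠ σL k) (hσn : ¬ Concurrent I (σL k) n) :
    #((transversals I k n).filter (· ∈ L')) = q + 1 := by
  have heq : (transversals I k n).filter (· ∈ L') =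
      (transversals I k (σL k)).filter (Concurrent I · n) := by
    ext m
    simp only [transversals, mem_filter, mem_univ, true_and]
    constructor
    · rintro ⟨⟨hkm, hnm⟩, hm⟩
      exact ⟨⟨hkm, S.concurrent_sigma_of_mem hk hm hkm⟩, hnm.symm⟩
    · rintro ⟨⟨hkm, hσm⟩, hmn⟩
      refine ⟨⟨hkm, hmn.symm⟩, ?_⟩
      by_contra hm
      exact S.not_concurrent_sigma_of_concurrent hk (S.external_iff_notMem.2 hm) hkm hσm
  rw [heq]
  refine S.gq.card_filter_transversals_concurrent (S.moves_external k hk).symm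
    (S.not_concurrent_sigma hk) (mem_filter.2 ⟨mem_univ _, ?_⟩)
  rintro ((h | h) | (h | h))
  exacts [hnk h.symm, hnc h, hnσ h.symm, hσn h]

/-- The only `L'`-transversal is the `L'`-line through `v = σk ∩ n`: an `L'`-transversal `m`
meeting `k` in `x` contains `σx ∈ σk`, so `v ∉ m` would give `v` two feet on `m`. -/
theorem card_filter_mem_transversals_of_concurrent_sigma {k n : L} (hk : External I P' k)
    (hn : External I P' n) (hσn : Concurrent I (σL k) n) :
    #((transversals I k n).filter (· ∈ L')) = 1 := by
  obtain ⟨hσkn, v, hvσ, hvn⟩ := hσn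
  have hv : v ∉ P' := fun h => hn v h hvn
  obtain ⟨l, hl, hvl⟩ := S.exists_mem_incident hv
  have hσvk : I (σP v) k := by simpa [S.involutive] using (S.incident_iff v (σL k)).1 hvσ
  rw [card_eq_one_iff_existsUnique]
  refine ⟨l, ?_, fun m hm => ?_⟩
  · simp only [transversals, mem_filter, mem_univ, true_and]
    refine ⟨⟨⟨?_, σP v, hσvk, S.incident_sigma_of_mem hl hvl⟩, ⟨?_, v, hvn, hvl⟩⟩, hl⟩
    · rintro rfl
      exact S.external_iff_notMem.1 hk hl
    · rintro rfl
      exact S.external_iff_notMem.1 hn hl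
  · simp only [transversals, mem_filter, mem_univ, true_and] at hm
    obtain ⟨⟨⟨-, x, hxk, hxm⟩, ⟨-, y, hyn, hym⟩⟩, hm⟩ := hm
    refine S.eq_of_mem_of_incident hv hm hl ?_ hvl
    by_contra hvm
    have hσxk : I (σP x) (σL k) := (S.incident_iff x k).1 hxk
    have hyσx : y = σP x :=
      S.gq.unique_foot hvm hym (S.incident_sigma_of_mem hm hxm) hvn hyn hvσ hσxk
    rw [← hyσx] at hσxk
    exact hvm (S.gq.unique_point hσkn hσxk hyn hvσ hvn ▸ hym)

theorem card_externalPerp_inter {ℓ n : L} (hℓ : External I P' ℓ) (hn : External I P' n) :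
    (#(externalPerp I P' ℓ ∩ externalPerp I P' n) : ℚ) =
      if n = ℓ then ((q : ℚ) - 1) * ((q : ℚ) ^ 2 + 1)
      else if n = σL ℓ then 0
      else if Concurrent I ℓ n then (q : ℚ) - 2
      else if Concurrent I (σL ℓ) n then (q : ℚ) ^ 2
      else (q : ℚ) ^ 2 - q := by
  have hq := S.two_le
  by_cases h₁ : n = ℓ
  · subst h₁
    rw [if_pos rfl, inter_self, S.card_externalPerp hℓ]
    push_cast [Nat.cast_sub (by omega : 1 ≤ q)]
    ring
  rw [if_neg h₁]
  by_cases h₂ : n = σL ℓ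
  · subst h₂
    rw [if_pos rfl, Nat.cast_eq_zero, card_eq_zero, eq_empty_iff_forall_notMem]
    intro m hm
    simp only [mem_inter, mem_externalPerp] at hm
    exact S.not_concurrent_sigma_of_concurrent hℓ hm.1.1 hm.1.2 hm.2.2
  rw [if_neg h₂]
  by_cases h₃ : Concurrent I ℓ n
  · rw [if_pos h₃, S.card_externalPerp_inter_of_concurrent hℓ hn h₃]
    push_cast [Nat.cast_sub hq]
    ring
  rw [if_neg h₃]
  have hsplit := congrArg (Nat.cast : ℕ → ℚ) (S.card_externalPerp_inter_add (Ne.symm h₁) h₃)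
  by_cases h₄ : Concurrent I (σL ℓ) n
  · rw [if_pos h₄, S.card_filter_mem_transversals_of_concurrent_sigma hℓ hn h₄] at *
    push_cast at hsplit
    linarith
  · rw [if_neg h₄, S.card_filter_mem_transversals hℓ h₃ h₁ h₂ h₄] at *
    push_cast at hsplit
    linarith

end

end SubquadrangleInvolution

/-- The row `M_k` of the matrix of the theorem. -/
noncomputable def gramRow [Fintype P] (I : P → L → Prop) (P' : Set P) (q : ℕ) (k : L) : L → ℚ :=
  fun n => if (∀ p ∈ P', ¬ I p k) ∧ (∀ p ∈ P', ¬ I p n) then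
    (if k = n then (q : ℚ) ^ 2 + 1 else if Concurrent I k n then 1 else 0) else 0

section GramRow

variable [Fintype P] {P' : Set P} {q : ℕ} {n : L}

theorem gramRow_apply_of_not_external (k : L) (hn : ¬ External I P' n) :
    gramRow I P' q k n = 0 :=
  if_neg fun h => hn h.2

variable [Fintype L]

theorem gramRow_apply (k : L) (hn : External I P' n) :
    gramRow I P' q k n =
      ((q : ℚ) ^ 2 + 1) * (if k = n then 1 else 0) + if k ∈ externalPerp I P' n then 1 else 0 := by
  have hn' : ∀ p ∈ P', ¬ I p n := hn
  simp only [mem_externalPerp, gramRow, External]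
  by_cases hk : ∀ p ∈ P', ¬ I p k
  · rw [if_pos ⟨hk, hn'⟩]
    by_cases hkn : k = n
    · subst hkn
      rw [if_pos rfl, if_pos rfl, if_neg fun h => not_concurrent_self k h.2]
      ring
    · rw [if_neg hkn, if_neg hkn, mul_zero, zero_add]
      exact if_congr ⟨fun h => ⟨hk, h.symm⟩, fun h => h.2.symm⟩ rfl rfl
  · rw [if_neg fun h => hk h.1, if_neg (show k ≠ n by rintro rfl; exact hk hn'),
      if_neg fun h => hk h.1]
    ring

theorem sum_gramRow_apply (A : Finset L) (hn : External I P' n) :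
    (∑ k ∈ A, gramRow I P' q k) n =
      ((q : ℚ) ^ 2 + 1) * (if n ∈ A then 1 else 0) + #(A ∩ externalPerp I P' n) := by
  simp only [Finset.sum_apply, gramRow_apply _ hn, sum_add_distrib, ← mul_sum, sum_ite_eq',
    sum_boole, filter_mem_eq_inter]

end GramRow

namespace SubquadrangleInvolution

variable [Fintype P] [Fintype L] {q : ℕ} {P' : Set P} {L' : Set L} {σP : P ≃ P} {σL : L ≃ L}
  (S : SubquadrangleInvolution I q P' L' σP σL)
include S

theorem sum_gramRow :
    ∑ k, gramRow I P' q k =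
      ((q : ℚ) * (q ^ 2 + 1)) • fun n => if External I P' n then 1 else 0 := by
  funext n
  by_cases hn : External I P' n
  · rw [sum_gramRow_apply _ hn, univ_inter, S.card_externalPerp hn]
    have hq := S.two_le
    simp only [mem_univ, if_true, Pi.smul_apply, if_pos hn, smul_eq_mul, mul_one]
    push_cast [Nat.cast_sub (by omega : 1 ≤ q)]
    ring
  · simp [Finset.sum_apply, gramRow_apply_of_not_external _ hn, hn]

theorem sum_externalPerp_gramRow_add {ℓ : L} (hℓ : External I P' ℓ) :
    ∑ k ∈ externalPerp I P' ℓ, gramRow I P' q k +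
        ∑ k ∈ externalPerp I P' (σL ℓ), gramRow I P' q k =
      (2 * (q : ℚ) ^ 2 - 2 * q) • (fun n => if External I P' n then 1 else 0) +
        (3 * (q : ℚ) - 1) • (gramRow I P' q ℓ + gramRow I P' q (σL ℓ)) -
        (2 * (q : ℚ) ^ 2 * (q + 1)) • fun n => if n = ℓ ∨ n = σL ℓ then 1 else 0 := by
  have hσℓ := S.external_sigma hℓ
  funext n
  simp only [Pi.add_apply, Pi.sub_apply, Pi.smul_apply, smul_eq_mul]
  by_cases hn : External I P' n
  · rw [sum_gramRow_apply _ hn, sum_gramRow_apply _ hn, gramRow_apply ℓ hn,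
      gramRow_apply (σL ℓ) hn, S.card_externalPerp_inter hℓ hn, S.card_externalPerp_inter hσℓ hn,
      S.involutive]
    simp only [mem_externalPerp, hn, hℓ, hσℓ, true_and, concurrent_comm (k := n)]
    have hσ : σL ℓ ≠ ℓ := S.moves_external ℓ hℓ
    have hℓσ : ¬ Concurrent I ℓ (σL ℓ) := S.not_concurrent_sigma hℓ
    by_cases h₁ : n = ℓ
    · subst h₁
      simp [hσ, hσ.symm, concurrent_comm.not.1 hℓσ, not_concurrent_self]
      ring
    by_cases h₂ : n = σL ℓ
    · subst h₂
      simp [hσ, hσ.symm, hℓσ, not_concurrent_self]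
      ring
    by_cases h₃ : Concurrent I ℓ n
    · simp [h₁, h₂, h₃, S.not_concurrent_sigma_of_concurrent hℓ hn h₃, Ne.symm h₁, Ne.symm h₂]
      ring
    by_cases h₄ : Concurrent I (σL ℓ) n
    · simp [h₁, h₂, h₃, h₄, Ne.symm h₁, Ne.symm h₂]
      ring
    · simp [h₁, h₂, h₃, h₄, Ne.symm h₁, Ne.symm h₂]
      ring
  · have hℓn : n ≠ ℓ := fun e => hn (e ▸ hℓ)
    have hσℓn : n ≠ σL ℓ := fun e => hn (e ▸ hσℓ)
    simp [Finset.sum_apply, gramRow_apply_of_not_external _ hn, hn, hℓn, hσℓn]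

theorem indicator_antipodal_pair_mem_span {ℓ : L} (hℓ : External I P' ℓ) :
    (fun n => if n = ℓ ∨ n = σL ℓ then (1 : ℚ) else 0) ∈
      Submodule.span ℚ (Set.range (gramRow I P' q)) := by
  set V := Submodule.span ℚ (Set.range (gramRow I P' q))
  have hrow : ∀ k, gramRow I P' q k ∈ V := fun k => Submodule.subset_span ⟨k, rfl⟩
  have hsum : ∀ A : Finset L, ∑ k ∈ A, gramRow I P' q k ∈ V :=
    fun A => V.sum_mem fun k _ => hrow k
  have hq : (0 : ℚ) < q := by exact_mod_cast (by have := S.two_le; omega : 0 < q)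
  have hext : (fun n => if External I P' n then (1 : ℚ) else 0) ∈ V := by
    have := V.smul_mem ((q * (q ^ 2 + 1) : ℚ)⁻¹) (hsum univ)
    rwa [S.sum_gramRow, smul_smul, inv_mul_cancel₀ (by positivity), one_smul] at this
  have hpair : (2 * (q : ℚ) ^ 2 * (q + 1)) •
      (fun n => if n = ℓ ∨ n = σL ℓ then (1 : ℚ) else 0) ∈ V := by
    rw [← sub_sub_cancel (_ + _) (_ • _), ← S.sum_externalPerp_gramRow_add hℓ]
    exact V.sub_mem (V.add_mem (V.smul_mem _ hext) (V.smul_mem _ (V.add_mem (hrow _) (hrow _))))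
      (V.add_mem (hsum _) (hsum _))
  exact (V.smul_mem_iff (by positivity)).1 hpair

end SubquadrangleInvolution

end

open scoped Classical in
theorem statement_19_general {P L : Type*} [Fintype P] [Fintype L] {I : P → L → Prop} {q : ℕ}
    (hq : 2 ≤ q)
    (hΓ : GenQuad P L I (q ^ 2) q)
    (P' : Set P) (L' : Set L) (hPne : P'.Nonempty)
    (hsub : GenQuad P' L' (fun p l => I p.1 l.1) q q)
    (hlines : ∀ p ∈ P', ∀ l : L, I p l → l ∈ L')
    (σP : P ≃ P) (σL : L ≃ L)
    (hσI : ∀ (p : P) (l : L), I p l ↔ I (σP p) (σL l))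
    (hσL2 : ∀ l, σL (σL l) = l)
    (hσfix : ∀ p ∈ P', σP p = p)
    (hσmoveL : ∀ l : L, (∀ p ∈ P', ¬ I p l) → σL l ≠ l)
    (ℓ : L) (hℓ : ∀ p ∈ P', ¬ I p ℓ) :
    (fun n : L => if n = ℓ ∨ n = σL ℓ then (1 : ℚ) else 0) ∈
      Submodule.span ℚ (Set.range fun k : L => fun n : L =>
        if (∀ p ∈ P', ¬ I p k) ∧ (∀ p ∈ P', ¬ I p n) then
          (if k = n then ((q : ℚ) ^ 2 + 1)
           else if Concurrent I k n then 1 else 0)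
        else 0) :=
  SubquadrangleInvolution.indicator_antipodal_pair_mem_span
    ⟨hq, hΓ, hPne, hsub, hlines, hσI, hσL2, hσfix, hσmoveL⟩ hℓ

open scoped Classical in
/-- Let `M` be the Gram-type matrix on external lines with rows
`M_ℓ = (q²+1) χ_ℓ + χ_{ℓ^⊥}` (`ℓ^⊥` the external lines concurrent with `ℓ`; entries of
`M` outside the external block are zero).  Then for every external line `ℓ` with
antipode `σL ℓ`, the vector `χ_ℓ + χ_{σL ℓ}` lies in the row space of `M` over `ℚ`. -/
theorem statement_19 {P L : Type*} [Fintype P] [Fintype L] {I : P → L → Prop} {q : ℕ}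
    (hq : 2 ≤ q)
    (hΓ : GenQuad P L I (q ^ 2) q)
    (P' : Set P) (L' : Set L) (hPne : P'.Nonempty)
    (hPproper : P' ≠ Set.univ) (hLproper : L' ≠ Set.univ)
    (hsub : GenQuad P' L' (fun p l => I p.1 l.1) q q)
    (hlines : ∀ p ∈ P', ∀ l : L, I p l → l ∈ L')
    (σP : P ≃ P) (σL : L ≃ L)
    (hσI : ∀ (p : P) (l : L), I p l ↔ I (σP p) (σL l))
    (hσP2 : ∀ p, σP (σP p) = p) (hσL2 : ∀ l, σL (σL l) = l)
    (hσfix : ∀ p ∈ P', σP p = p)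
    (hσmoveL : ∀ l : L, (∀ p ∈ P', ¬ I p l) → σL l ≠ l)
    (ℓ : L) (hℓ : ∀ p ∈ P', ¬ I p ℓ) :
    (fun n : L => if n = ℓ ∨ n = σL ℓ then (1 : ℚ) else 0) ∈
      Submodule.span ℚ (Set.range fun k : L => fun n : L =>
        if (∀ p ∈ P', ¬ I p k) ∧ (∀ p ∈ P', ¬ I p n) then
          (if k = n then ((q : ℚ) ^ 2 + 1)
           else if Concurrent I k n then 1 else 0)
        else 0) :=
  statement_19_general hq hΓ P' L' hPne hsub hlines σP σL hσI hσL2 hσfix hσmoveL ℓ hℓ
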